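/- arXiv:2206.02072 — 3 statements merged into one kernel-verified Lean document; each statement's English description precedes it below -/
import Mathlib

section
/- Let M and M̂ be two MDP models on the same finite state space S, finite action space A, initial distribution β and horizon H, and let π = (π_1,…,π_H) be any nonstationary policy. Then V^π_{M,1} − V^π_{M̂,1} = Σ_{h=1}^H E_{τ∼ρ^π_{M̂}}[ B^{π_h}_M V^π_{M,h+1}(s_h) − B^{π_h}_{M̂} V^π_{M,h+1}(s_h) ], where s_h is the h-th state of the trajectory τ drawn from the trajectory distribution of π in M̂; and likewise V^π_{M,1} − V^π_{M̂,1} = Σ_{h=1}^H E_{τ∼ρ^π_M}[ B^{π_h}_M V^π_{M̂,h+1}(s_h) − B^{π_h}_{M̂} V^π_{M̂,h+1}(s_h) ], where s_h is the h-th state of the trajectory τ drawn from the trajectory distribution of π in M. -/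
/-!
Let `d_h` be the law of the `h`-th state under `π` in `M̂`; since every later transition and
action row sums to one, it is also the `h`-th marginal of the trajectory density. Put
`e_h = E_{d_h}[V^π_{M,h} − V^π_{M̂,h}]`. Splitting
`V^π_{M,h} − V^π_{M̂,h} = (B_M − B_{M̂}) V^π_{M,h+1} + B_{M̂} (V^π_{M,h+1} − V^π_{M̂,h+1})`
and noting that applying `B_{M̂}` to a difference and averaging over `d_h` is averaging over
`d_{h+1}`, the increment `e_h − e_{h+1}` is the `h`-th Bellman error term, so the sum telescopes
from `e_1`, the value gap, to `e_{H+1} = 0`. The second identity is the first with `M` and `M̂`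
exchanged.
-/

open Finset

/-- An MDP model on state space `S` and action space `A`: a reward table
`R : S → A → ℝ` together with a transition table `T : S → A → S → ℝ`. -/
abbrev MDPModel (S A : Type*) := (S → A → ℝ) × (S → A → S → ℝ)

/-- `f` is a probability mass function on the finite type `α`. -/
def IsPMF {α : Type*} [Fintype α] (f : α → ℝ) : Prop := (∀ a, 0 ≤ f a) ∧ ∑ a, f a = 1

variable {S A : Type*}

section Defs

variable [Fintype S] [Fintype A]

/-- Validity of an MDP model: rewards lie in `[0,1]` and each transition row is a PMF on `S`. -/
def IsValidModel (M : MDPModel S A) : Prop :=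
  (∀ s a, M.1 s a ∈ Set.Icc (0 : ℝ) 1) ∧ ∀ s a, IsPMF (fun s' => M.2 s a s')

/-- A stationary stochastic policy: every row is a PMF on actions. -/
def IsPolicy (σ : S → A → ℝ) : Prop := ∀ s, IsPMF (σ s)

/-- The Bellman operator of model `M` under stationary policy `σ`. -/
def bellman (M : MDPModel S A) (σ : S → A → ℝ) (V : S → ℝ) (s : S) : ℝ :=
  ∑ a, σ s a * (M.1 s a + ∑ s', M.2 s a s' * V s')

/-- Value function with `n` steps to go (auxiliary to `val`); a nonstationary policy is
encoded as `π : ℕ → S → A → ℝ`, with only the components `π 1, …, π H` being relevant. -/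
def valAux (M : MDPModel S A) (π : ℕ → S → A → ℝ) (H : ℕ) : ℕ → S → ℝ
  | 0 => fun _ => 0
  | n + 1 => bellman M (π (H - n)) (valAux M π H n)

/-- `V^π_{M,h}` for horizon `H`, defined by the backward recursion
`V^π_{M,H+1} = 0`, `V^π_{M,h} = B^{π_h}_M V^π_{M,h+1}` (meaningful for `1 ≤ h ≤ H+1`). -/
def val (M : MDPModel S A) (π : ℕ → S → A → ℝ) (H h : ℕ) : S → ℝ :=
  valAux M π H (H + 1 - h)

/-- `Q^π_{M,h}(s,a) = R_M(s,a) + Σ_{s'} T_M(s,a)(s') · V^π_{M,h+1}(s')`. -/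
def qval (M : MDPModel S A) (π : ℕ → S → A → ℝ) (H h : ℕ) (s : S) (a : A) : ℝ :=
  M.1 s a + ∑ s', M.2 s a s' * val M π H (h + 1) s'

/-- The β-averaged value of `π` at step 1: `V^π_{M,1} = Σ_s β(s) · V^π_{M,1}(s)`. -/
def valBar (M : MDPModel S A) (π : ℕ → S → A → ℝ) (H : ℕ) (β : S → ℝ) : ℝ :=
  ∑ s, β s * val M π H 1 s

end Defs

/-- The density of the trajectory distribution `ρ^π_M`: a trajectory
`τ = (s_1, a_1, …, s_H, a_H, s_{H+1})` is encoded as a pair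
`(τ.1, τ.2) : (Fin (H+1) → S) × (Fin H → A)`, with the paper's `s_h` (resp. `a_h`)
being `τ.1 ⟨h-1⟩` (resp. `τ.2 ⟨h-1⟩`), and has probability
`β(s_1) · ∏_{h=1}^H π_h(s_h)(a_h) · T_M(s_h,a_h)(s_{h+1})`. -/
def trajDensity [Fintype S] [Fintype A] (M : MDPModel S A) (β : S → ℝ)
    (π : ℕ → S → A → ℝ) (H : ℕ) (τ : (Fin (H + 1) → S) × (Fin H → A)) : ℝ :=
  β (τ.1 0) * ∏ h : Fin H,
    π (h.1 + 1) (τ.1 h.castSucc) (τ.2 h) * M.2 (τ.1 h.castSucc) (τ.2 h) (τ.1 h.succ)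

section MarkovChain

def pathWeight (μ : S → ℝ) (T : ℕ → S → S → ℝ) {n : ℕ} (x : Fin (n + 1) → S) : ℝ :=
  μ (x 0) * ∏ k : Fin n, T k (x k.castSucc) (x k.succ)

lemma pathWeight_snoc (μ : S → ℝ) (T : ℕ → S → S → ℝ) {n : ℕ} (y : Fin (n + 1) → S) (s : S) :
    pathWeight μ T (Fin.snoc y s : Fin (n + 2) → S) =
      pathWeight μ T y * T n (y (Fin.last n)) s := by
  simp only [pathWeight, Fin.prod_univ_castSucc, Fin.snoc_apply_zero, Fin.snoc_castSucc,
    Fin.succ_castSucc, Fin.val_castSucc, Fin.succ_last, Fin.snoc_last, Fin.val_last]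
  ring

variable [Fintype S]

-- `marginal μ T k` is the law of `x k`, i.e. of the paper's `s_{k+1}` when `μ = β`.
def marginal (μ : S → ℝ) (T : ℕ → S → S → ℝ) : ℕ → S → ℝ
  | 0 => μ
  | k + 1 => fun s' => ∑ s, marginal μ T k s * T k s s'

lemma sum_marginal_succ_mul (μ : S → ℝ) (T : ℕ → S → S → ℝ) (k : ℕ) (f : S → ℝ) :
    ∑ s', marginal μ T (k + 1) s' * f s' = ∑ s, marginal μ T k s * ∑ s', T k s s' * f s' := by
  simp only [marginal, Finset.sum_mul, Finset.mul_sum]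
  rw [Finset.sum_comm]
  exact Finset.sum_congr rfl fun _ _ => Finset.sum_congr rfl fun _ _ => by ring

lemma sum_pathWeight_mul_snoc (μ : S → ℝ) (T : ℕ → S → S → ℝ) {n : ℕ}
    (G : (Fin (n + 2) → S) → ℝ) :
    ∑ x, pathWeight μ T x * G x =
      ∑ y : Fin (n + 1) → S, pathWeight μ T y * ∑ s, T n (y (Fin.last n)) s * G (Fin.snoc y s) := by
  rw [← (Fin.snocEquiv fun _ => S).sum_comp, Fintype.sum_prod_type, Finset.sum_comm]
  refine Finset.sum_congr rfl fun y _ => ?_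
  rw [Finset.mul_sum]
  refine Finset.sum_congr rfl fun s _ => ?_
  change pathWeight μ T (Fin.snoc y s : Fin (n + 2) → S) * _ = _
  rw [pathWeight_snoc, mul_assoc]
  rfl

lemma sum_pathWeight_mul_apply (μ : S → ℝ) (T : ℕ → S → S → ℝ)
    (hT : ∀ k s, ∑ s', T k s s' = 1) (n : ℕ) (j : Fin (n + 1)) (f : S → ℝ) :
    ∑ x : Fin (n + 1) → S, pathWeight μ T x * f (x j) = ∑ s, marginal μ T j s * f s := by
  induction n generalizing f with
  | zero =>
    rw [Fin.fin_one_eq_zero j, ← (Equiv.funUnique (Fin 1) S).symm.sum_comp]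
    simp [pathWeight, marginal]
  | succ n ih =>
    rw [sum_pathWeight_mul_snoc]
    induction j using Fin.lastCases with
    | last =>
      simp only [Fin.snoc_last, Fin.val_last, sum_marginal_succ_mul]
      exact ih (Fin.last n) fun s => ∑ s', T n s s' * f s'
    | cast i =>
      simp only [Fin.snoc_castSucc, ← Finset.sum_mul, hT, one_mul, Fin.val_castSucc]
      exact ih i f

end MarkovChain

section Bellman

variable [Fintype S] [Fintype A]

def stateKernel (M : MDPModel S A) (σ : S → A → ℝ) (s s' : S) : ℝ :=
  ∑ a, σ s a * M.2 s a s'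

lemma sum_stateKernel (M : MDPModel S A) (σ : S → A → ℝ)
    (hM : ∀ s a, ∑ s', M.2 s a s' = 1) (hσ : ∀ s, ∑ a, σ s a = 1) (s : S) :
    ∑ s', stateKernel M σ s s' = 1 := by
  simp only [stateKernel]
  rw [Finset.sum_comm]
  simp only [← Finset.mul_sum, hM, mul_one, hσ]

lemma bellman_sub_bellman (M : MDPModel S A) (σ : S → A → ℝ) (V W : S → ℝ) (s : S) :
    bellman M σ V s - bellman M σ W s = ∑ s', stateKernel M σ s s' * (V s' - W s') := by
  simp only [bellman, stateKernel, ← Finset.sum_sub_distrib, Finset.sum_mul]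
  rw [Finset.sum_comm]
  refine Finset.sum_congr rfl fun a _ => ?_
  rw [← mul_sub, add_sub_add_left_eq_sub, ← Finset.sum_sub_distrib, Finset.mul_sum]
  exact Finset.sum_congr rfl fun _ _ => by ring

lemma val_succ_self (M : MDPModel S A) (π : ℕ → S → A → ℝ) (H : ℕ) :
    val M π H (H + 1) = 0 := by
  simp only [_root_.val, Nat.sub_self]
  rfl

lemma val_eq_bellman (M : MDPModel S A) (π : ℕ → S → A → ℝ) {H h : ℕ} (hh : h ≤ H) :
    val M π H h = bellman M (π h) (val M π H (h + 1)) := by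
  obtain ⟨n, rfl⟩ := Nat.exists_eq_add_of_le hh
  simp only [_root_.val, show h + n + 1 - h = n + 1 by omega, show h + n + 1 - (h + 1) = n by omega,
    valAux, show h + n - n = h by omega]

lemma sum_trajDensity_mul_apply (M : MDPModel S A) (β : S → ℝ) (π : ℕ → S → A → ℝ) (H : ℕ)
    (hM : ∀ s a, ∑ s', M.2 s a s' = 1) (hπ : ∀ h s, ∑ a, π h s a = 1)
    (j : Fin (H + 1)) (f : S → ℝ) :
    ∑ τ : (Fin (H + 1) → S) × (Fin H → A), trajDensity M β π H τ * f (τ.1 j) =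
      ∑ s, marginal β (fun k => stateKernel M (π (k + 1))) j s * f s := by
  rw [Fintype.sum_prod_type,
    ← sum_pathWeight_mul_apply _ _ fun k => sum_stateKernel M _ hM (hπ (k + 1))]
  refine Finset.sum_congr rfl fun x _ => ?_
  simp only [pathWeight, stateKernel, Finset.prod_univ_sum, Fintype.piFinset_univ,
    Finset.mul_sum, Finset.sum_mul, trajDensity]

end Bellman

section ValueDifference

variable [Fintype S] [Fintype A]

lemma sum_marginal_mul_val_sub_val (M Mh : MDPModel S A) (β : S → ℝ) (π : ℕ → S → A → ℝ)
    {H k : ℕ} (hk : k < H) :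
    ∑ s, marginal β (fun k => stateKernel Mh (π (k + 1))) k s *
        (val M π H (k + 1) s - val Mh π H (k + 1) s) =
      ∑ s, marginal β (fun k => stateKernel Mh (π (k + 1))) k s *
        (bellman M (π (k + 1)) (val M π H (k + 2)) s -
          bellman Mh (π (k + 1)) (val M π H (k + 2)) s) +
      ∑ s, marginal β (fun k => stateKernel Mh (π (k + 1))) (k + 1) s *
        (val M π H (k + 2) s - val Mh π H (k + 2) s) := by
  rw [val_eq_bellman M π (h := k + 1) hk, val_eq_bellman Mh π (h := k + 1) hk,
    sum_marginal_succ_mul, ← Finset.sum_add_distrib]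
  refine Finset.sum_congr rfl fun s _ => ?_
  rw [← bellman_sub_bellman]
  ring

theorem valBar_sub_valBar_eq_sum_trajDensity (M Mh : MDPModel S A) (β : S → ℝ)
    (π : ℕ → S → A → ℝ) (H : ℕ) (hMh : ∀ s a, ∑ s', Mh.2 s a s' = 1)
    (hπ : ∀ h s, ∑ a, π h s a = 1) :
    valBar M π H β - valBar Mh π H β =
      ∑ h : Fin H, ∑ τ : (Fin (H + 1) → S) × (Fin H → A), trajDensity Mh β π H τ *
        (bellman M (π (h.1 + 1)) (val M π H (h.1 + 2)) (τ.1 h.castSucc) -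
          bellman Mh (π (h.1 + 1)) (val M π H (h.1 + 2)) (τ.1 h.castSucc)) := by
  set d := marginal β fun k => stateKernel Mh (π (k + 1))
  set e : ℕ → ℝ := fun k => ∑ s, d k s * (val M π H (k + 1) s - val Mh π H (k + 1) s)
  have he_zero : valBar M π H β - valBar Mh π H β = e 0 := by
    simp only [valBar, e, d, marginal, ← Finset.sum_sub_distrib, mul_sub]
  have he_horizon : e H = 0 := by
    simp [e, val_succ_self]
  have he_sub_succ (k : ℕ) (hk : k < H) : e k - e (k + 1) = ∑ s, d k s *
      (bellman M (π (k + 1)) (val M π H (k + 2)) s -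
        bellman Mh (π (k + 1)) (val M π H (k + 2)) s) :=
    sub_eq_iff_eq_add.2 (sum_marginal_mul_val_sub_val M Mh β π hk)
  calc valBar M π H β - valBar Mh π H β = e 0 - e H := by rw [he_zero, he_horizon, sub_zero]
    _ = ∑ h : Fin H, (e h - e (h + 1)) := by
      rw [Fin.sum_univ_eq_sum_range (fun k => e k - e (k + 1)), Finset.sum_range_sub']
    _ = _ := by
      refine Finset.sum_congr rfl fun h _ => ?_
      rw [he_sub_succ h h.2]
      exact (sum_trajDensity_mul_apply Mh β π H hMh hπ h.castSucc _).symm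

end ValueDifference

theorem value_difference_bellman_decomposition_general
    [Fintype S] [Fintype A]
    (H : ℕ) (β : S → ℝ)
    (M Mh : MDPModel S A) (hM : IsValidModel M) (hMh : IsValidModel Mh)
    (π : ℕ → S → A → ℝ) (hπ : ∀ h, IsPolicy (π h)) :
    (valBar M π H β - valBar Mh π H β =
      ∑ h : Fin H, ∑ τ : (Fin (H + 1) → S) × (Fin H → A), trajDensity Mh β π H τ *
        (bellman M (π (h.1 + 1)) (val M π H (h.1 + 2)) (τ.1 h.castSucc) -
          bellman Mh (π (h.1 + 1)) (val M π H (h.1 + 2)) (τ.1 h.castSucc))) ∧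
    (valBar M π H β - valBar Mh π H β =
      ∑ h : Fin H, ∑ τ : (Fin (H + 1) → S) × (Fin H → A), trajDensity M β π H τ *
        (bellman M (π (h.1 + 1)) (val Mh π H (h.1 + 2)) (τ.1 h.castSucc) -
          bellman Mh (π (h.1 + 1)) (val Mh π H (h.1 + 2)) (τ.1 h.castSucc))) := by
  have hπ_sum : ∀ h s, ∑ a, π h s a = 1 := fun h s => (hπ h s).2
  refine ⟨valBar_sub_valBar_eq_sum_trajDensity M Mh β π H (fun s a => (hMh.2 s a).2) hπ_sum, ?_⟩
  rw [← neg_sub, valBar_sub_valBar_eq_sum_trajDensity Mh M β π H (fun s a => (hM.2 s a).2) hπ_sum]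
  simp only [← Finset.sum_neg_distrib, ← mul_neg, neg_sub]

/-- simulation lemma / Bellman-error value decomposition.
For two MDP models `M`, `Mh` on the same `S`, `A`, `β`, `H` and any nonstationary
policy `π`, the gap `V^π_{M,1} − V^π_{Mh,1}` decomposes as the sum over `h ∈ [H]` of
expected Bellman-operator differences, under trajectories of `π` in `Mh` applied
to `V^π_{M,h+1}`, and likewise under trajectories of `π` in `M` applied to `V^π_{Mh,h+1}`. -/
theorem value_difference_bellman_decomposition
    [Fintype S] [Fintype A] [Nonempty S] [Nonempty A]
    (H : ℕ) (hH : 1 ≤ H) (β : S → ℝ) (hβ : IsPMF β)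
    (M Mh : MDPModel S A) (hM : IsValidModel M) (hMh : IsValidModel Mh)
    (π : ℕ → S → A → ℝ) (hπ : ∀ h, IsPolicy (π h)) :
    (valBar M π H β - valBar Mh π H β =
      ∑ h : Fin H, ∑ τ : (Fin (H + 1) → S) × (Fin H → A), trajDensity Mh β π H τ *
        (bellman M (π (h.1 + 1)) (val M π H (h.1 + 2)) (τ.1 h.castSucc) -
          bellman Mh (π (h.1 + 1)) (val M π H (h.1 + 2)) (τ.1 h.castSucc))) ∧
    (valBar M π H β - valBar Mh π H β =
      ∑ h : Fin H, ∑ τ : (Fin (H + 1) → S) × (Fin H → A), trajDensity M β π H τ *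
        (bellman M (π (h.1 + 1)) (val Mh π H (h.1 + 2)) (τ.1 h.castSucc) -
          bellman Mh (π (h.1 + 1)) (val Mh π H (h.1 + 2)) (τ.1 h.castSucc))) :=
  value_difference_bellman_decomposition_general H β M Mh hM hMh π hπ
end

section
/- Let M and M̂ be MDP models on the same finite S, A, β, H, set ε = max_{h∈[H]} max_{(s,a)∈S×A} |Q*_{M,h}(s,a) − Q*_{M̂,h}(s,a)|, and let π̂ be any nonstationary policy that is optimal for M̂ (for instance, any greedy policy with respect to Q*_{M̂}). Then V*_{M,1} − V^{π̂}_{M,1} ≤ 2Hε. -/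
open Finset

variable {S A : Type*}

section OptDefs

variable [Fintype S] [Fintype A] [Nonempty A]

/-- Optimal value with `n` steps to go (auxiliary to `optVal`). -/
noncomputable def optValAux (M : MDPModel S A) : ℕ → S → ℝ
  | 0 => fun _ => 0
  | n + 1 => fun s =>
      univ.sup' univ_nonempty fun a => M.1 s a + ∑ s', M.2 s a s' * optValAux M n s'

/-- `V*_{M,h}` for horizon `H`: `V*_{M,H+1} = 0`, `V*_{M,h}(s) = max_a Q*_{M,h}(s,a)`. -/
noncomputable def optVal (M : MDPModel S A) (H h : ℕ) : S → ℝ := optValAux M (H + 1 - h)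

/-- `Q*_{M,h}(s,a) = R_M(s,a) + Σ_{s'} T_M(s,a)(s') · V*_{M,h+1}(s')`. -/
noncomputable def optQ (M : MDPModel S A) (H h : ℕ) (s : S) (a : A) : ℝ :=
  M.1 s a + ∑ s', M.2 s a s' * optVal M H (h + 1) s'

/-- The β-averaged optimal value at step 1: `V*_{M,1} = Σ_s β(s) · V*_{M,1}(s)`. -/
noncomputable def optValBar (M : MDPModel S A) (H : ℕ) (β : S → ℝ) : ℝ :=
  ∑ s, β s * optVal M H 1 s

/-- `π` is an optimal nonstationary policy for `M`. -/
noncomputable def IsOptimalPolicy (M : MDPModel S A) (H : ℕ) (π : ℕ → S → A → ℝ) : Prop :=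
  ∀ h, 1 ≤ h → h ≤ H + 1 → val M π H h = optVal M H h

end OptDefs

/-! Since `π̂` is optimal for `M̂`, at every step
`V*_M − V^π̂_M = (V*_M − V*_M̂) + (V^π̂_M̂ − V^π̂_M)`. The first term is at most `ε`, a maximum
over actions being `1`-Lipschitz. The second is a `π̂`-average of
`Q*_M̂ − Q^π̂_M = (Q*_M̂ − Q*_M) + T_M (V*_M − V^π̂_M)`, the last term taken one step later.
So the loss grows by at most `2ε` per step of backward induction, hence `2Hε` in total. -/

theorem IsPMF.sum_mul_sub_sum_mul_le {α : Type*} [Fintype α] {f g g' : α → ℝ} {c : ℝ}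
    (hf : IsPMF f) (hg : ∀ a, g a - g' a ≤ c) :
    ∑ a, f a * g a - ∑ a, f a * g' a ≤ c :=
  calc ∑ a, f a * g a - ∑ a, f a * g' a = ∑ a, f a * (g a - g' a) := by
        simp only [mul_sub, sum_sub_distrib]
    _ ≤ ∑ a, f a * c := sum_le_sum fun a _ => mul_le_mul_of_nonneg_left (hg a) (hf.1 a)
    _ = c := by rw [← sum_mul, hf.2, one_mul]

section Bellman

variable [Fintype S] [Fintype A]

theorem val_eq_sum_qval (M : MDPModel S A) (π : ℕ → S → A → ℝ) {H h : ℕ} (hh : h ≤ H)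
    (s : S) : val M π H h s = ∑ a, π h s a * qval M π H h s a := by
  have e₁ : H + 1 - h = H - h + 1 := by omega
  have e₂ : H + 1 - (h + 1) = H - h := by omega
  have e₃ : H - (H - h) = h := by omega
  simp only [_root_.val, qval, e₁, e₂, e₃, valAux, bellman]

theorem val_horizon_succ (M : MDPModel S A) (π : ℕ → S → A → ℝ) (H : ℕ) (s : S) :
    val M π H (H + 1) s = 0 := by
  simp [_root_.val, valAux]

variable [Nonempty A]

theorem optVal_eq_sup' (M : MDPModel S A) {H h : ℕ} (hh : h ≤ H) (s : S) :
    optVal M H h s = univ.sup' univ_nonempty (optQ M H h s) := by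
  have e₁ : H + 1 - h = H - h + 1 := by omega
  have e₂ : H + 1 - (h + 1) = H - h := by omega
  simp only [optVal, e₁, optValAux]
  congr 1
  funext a
  rw [optQ, optVal, e₂]

theorem optVal_horizon_succ (M : MDPModel S A) (H : ℕ) (s : S) :
    optVal M H (H + 1) s = 0 := by
  simp [optVal, optValAux]

theorem qval_eq_optQ_of_isOptimalPolicy {M : MDPModel S A} {H : ℕ} {π : ℕ → S → A → ℝ}
    (hπ : IsOptimalPolicy M H π) {h : ℕ} (hh : h ≤ H) : qval M π H h = optQ M H h := by
  funext s a
  rw [qval, optQ, hπ (h + 1) (by omega) (by omega)]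

theorem optVal_le_optVal_add {M M' : MDPModel S A} {H h : ℕ} (hh : h ≤ H) {s : S} {ε : ℝ}
    (hQ : ∀ a, optQ M H h s a ≤ optQ M' H h s a + ε) :
    optVal M H h s ≤ optVal M' H h s + ε := by
  rw [optVal_eq_sup' M hh, optVal_eq_sup' M' hh]
  exact sup'_le _ _ fun a _ => (hQ a).trans (by gcongr; exact le_sup' _ (mem_univ a))

theorem optQ_sub_qval_le {M : MDPModel S A} (hT : ∀ s a, IsPMF (M.2 s a))
    (π : ℕ → S → A → ℝ) {H h : ℕ} {c : ℝ}
    (hgap : ∀ s', optVal M H (h + 1) s' - val M π H (h + 1) s' ≤ c) (s : S) (a : A) :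
    optQ M H h s a - qval M π H h s a ≤ c := by
  rw [optQ, qval, add_sub_add_left_eq_sub]
  exact (hT s a).sum_mul_sub_sum_mul_le hgap

theorem optVal_sub_val_le_of_close_optQ {M M' : MDPModel S A} (hT : ∀ s a, IsPMF (M.2 s a))
    {H h : ℕ} (h₁ : 1 ≤ h) (hh : h ≤ H) {π : ℕ → S → A → ℝ} (hπ : IsPolicy (π h))
    (hopt : IsOptimalPolicy M' H π) {ε c : ℝ}
    (hQ : ∀ s a, |optQ M H h s a - optQ M' H h s a| ≤ ε)
    (hgap : ∀ s', optVal M H (h + 1) s' - val M π H (h + 1) s' ≤ c) (s : S) :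
    optVal M H h s - val M π H h s ≤ 2 * ε + c := by
  have hM : optVal M H h s ≤ optVal M' H h s + ε :=
    optVal_le_optVal_add hh fun a => by linarith [(abs_le.mp (hQ s a)).2]
  have hM' : optVal M' H h s - val M π H h s ≤ ε + c := by
    rw [← hopt h h₁ (by omega), val_eq_sum_qval M' π hh, val_eq_sum_qval M π hh,
      qval_eq_optQ_of_isOptimalPolicy hopt hh]
    refine (hπ s).sum_mul_sub_sum_mul_le fun a => ?_
    linarith [(abs_le.mp (hQ s a)).1, optQ_sub_qval_le hT π hgap s a]
  linarith

theorem optVal_sub_val_le_of_forall_close_optQ {M M' : MDPModel S A}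
    (hT : ∀ s a, IsPMF (M.2 s a)) {H : ℕ} {π : ℕ → S → A → ℝ} (hπ : ∀ h, IsPolicy (π h))
    (hopt : IsOptimalPolicy M' H π) {ε : ℝ}
    (hQ : ∀ h, 1 ≤ h → h ≤ H → ∀ s a, |optQ M H h s a - optQ M' H h s a| ≤ ε)
    {k : ℕ} (hk : k ≤ H) (s : S) :
    optVal M H (H + 1 - k) s - val M π H (H + 1 - k) s ≤ 2 * k * ε := by
  induction k generalizing s with
  | zero => simp [optVal_horizon_succ, val_horizon_succ]
  | succ k ih =>
    have e : H - k + 1 = H + 1 - k := by omega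
    have step := optVal_sub_val_le_of_close_optQ hT (h := H - k) (by omega)
      (by omega) (hπ _) hopt (hQ _ (by omega) (by omega)) (c := 2 * k * ε)
      (fun s' => e ▸ ih (by omega) s') s
    rw [show H + 1 - (k + 1) = H - k by omega]
    push_cast
    linarith

end Bellman

theorem regret_of_optimal_policy_of_close_model_general
    [Fintype S] [Fintype A] [Nonempty S] [Nonempty A]
    (H : ℕ) (hH : 1 ≤ H) (β : S → ℝ) (hβ : IsPMF β)
    (M Mh : MDPModel S A) (hM : IsValidModel M)
    (ε : ℝ)
    (hε : ε = (Finset.Icc 1 H).sup' (Finset.nonempty_Icc.mpr hH) fun h =>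
      univ.sup' univ_nonempty fun sa : S × A =>
        |optQ M H h sa.1 sa.2 - optQ Mh H h sa.1 sa.2|)
    (πh : ℕ → S → A → ℝ) (hπh : ∀ h, IsPolicy (πh h))
    (hopt : IsOptimalPolicy Mh H πh) :
    optValBar M H β - valBar M πh H β ≤ 2 * H * ε := by
  have hQ : ∀ h, 1 ≤ h → h ≤ H → ∀ s a, |optQ M H h s a - optQ Mh H h s a| ≤ ε := by
    intro h h₁ hh s a
    rw [hε]
    exact (le_sup' (fun sa : S × A => |optQ M H h sa.1 sa.2 - optQ Mh H h sa.1 sa.2|)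
      (mem_univ (s, a))).trans (le_sup' (fun h => univ.sup' univ_nonempty fun sa : S × A =>
        |optQ M H h sa.1 sa.2 - optQ Mh H h sa.1 sa.2|) (mem_Icc.mpr ⟨h₁, hh⟩))
  have hgap := optVal_sub_val_le_of_forall_close_optQ hM.2 hπh hopt hQ le_rfl
  rw [Nat.add_sub_cancel_left] at hgap
  exact hβ.sum_mul_sub_sum_mul_le hgap

/-- With `ε = max_{h∈[H]} max_{(s,a)} |Q*_{M,h}(s,a) − Q*_{Mh,h}(s,a)|`
and `π̂` any nonstationary policy optimal for `Mh`, one has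
`V*_{M,1} − V^{π̂}_{M,1} ≤ 2Hε` for the β-averaged values at step 1. -/
theorem regret_of_optimal_policy_of_close_model
    [Fintype S] [Fintype A] [Nonempty S] [Nonempty A]
    (H : ℕ) (hH : 1 ≤ H) (β : S → ℝ) (hβ : IsPMF β)
    (M Mh : MDPModel S A) (hM : IsValidModel M) (hMh : IsValidModel Mh)
    (ε : ℝ)
    (hε : ε = (Finset.Icc 1 H).sup' (Finset.nonempty_Icc.mpr hH) fun h =>
      univ.sup' univ_nonempty fun sa : S × A =>
        |optQ M H h sa.1 sa.2 - optQ Mh H h sa.1 sa.2|)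
    (πh : ℕ → S → A → ℝ) (hπh : ∀ h, IsPolicy (πh h))
    (hopt : IsOptimalPolicy Mh H πh) :
    optValBar M H β - valBar M πh H β ≤ 2 * H * ε :=
  regret_of_optimal_policy_of_close_model_general H hH β hβ M Mh hM ε hε πh hπh hopt
end

section
/- Let X and Z be nonempty finite types, f : X → Z a function, and ℓ : Z × Z → ℝ a nonnegative function with ℓ(z,z) = 0 for every z. Let p be a probability distribution on X, and let q be a probability distribution on X × X whose first marginal equals p, whose expected distortion Σ_{(x,x̂)} q(x,x̂)·ℓ(f(x), f(x̂)) equals 0, and which minimizes the mutual information I(q) among all probability distributions on X × X with first marginal p and expected distortion 0. Then the two coordinates are conditionally independent given f of the first coordinate: for all x, x̂ ∈ X, q(x,x̂)·m(f(x)) = p(x)·r(f(x), x̂), where m(z) = Σ_{x' : f(x') = z} p(x') and r(z, x̂) = Σ_{x' : f(x') = z} q(x', x̂). -/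
open Finset

/-- A probability distribution on the finite type `X`. -/
def FinDist {X : Type*} [Fintype X] (p : X → ℝ) : Prop :=
  (∀ x, 0 ≤ p x) ∧ ∑ x, p x = 1

/-- Mutual information of a joint distribution `q` on `X × Y` (natural logarithm),
summing over the pairs with `q (x,y) > 0`. -/
noncomputable def mutualInfo {X Y : Type*} [Fintype X] [Fintype Y] (q : X × Y → ℝ) : ℝ :=
  ∑ xy : X × Y,
    if 0 < q xy then
      q xy * Real.log (q xy / ((∑ y, q (xy.1, y)) * (∑ x, q (x, xy.2)))) else 0

/-!
The Markov projection `q*(x, y) = p(x) · r(f x, y) / m(f x)` of `q` keeps the first marginal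
and the joint law of `(f x, y)`, hence the second marginal and the expected distortion, so it
is again a competitor. Since `log (q*/(q₁ q₂))` depends on `(x, y)` only through `(f x, y)`,
the mutual information splits as `I(q) = I(q*) + D(q ‖ q*)`. Minimality of `q` forces the
Kullback–Leibler divergence to vanish, and Gibbs' inequality then gives `q = q*`.
-/

open Real InformationTheory

section Gibbs

variable {a b : ℝ}

lemma mul_klFun_div (hb : b ≠ 0) : b * klFun (a / b) = a * log (a / b) + b - a := by
  rw [klFun_apply]
  field_simp

lemma sub_le_mul_log_div (ha : 0 ≤ a) (hb : 0 ≤ b) (hab : 0 < a → 0 < b) :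
    a - b ≤ a * log (a / b) := by
  rcases hb.eq_or_lt with rfl | hb
  · simp [le_antisymm (not_lt.1 (mt hab (lt_irrefl 0))) ha]
  · have := mul_nonneg hb.le (klFun_nonneg (div_nonneg ha hb.le))
    rw [mul_klFun_div hb.ne'] at this
    linarith

lemma eq_of_mul_log_div_eq_sub (ha : 0 ≤ a) (hb : 0 ≤ b) (hab : 0 < a → 0 < b)
    (h : a * log (a / b) = a - b) : a = b := by
  rcases hb.eq_or_lt with rfl | hb
  · exact le_antisymm (not_lt.1 (mt hab (lt_irrefl 0))) ha
  · have hkl : b * klFun (a / b) = 0 := by rw [mul_klFun_div hb.ne', h]; ring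
    have := (klFun_eq_zero_iff (div_nonneg ha hb.le)).1
      ((mul_eq_zero.1 hkl).resolve_left hb.ne')
    exact (div_eq_one_iff_eq hb.ne').1 this

theorem eq_of_sum_mul_log_div_nonpos {ι : Type*} [Fintype ι] {a b : ι → ℝ} (ha : 0 ≤ a)
    (hb : 0 ≤ b) (hab : ∀ i, 0 < a i → 0 < b i) (hsum : ∑ i, a i = ∑ i, b i)
    (h : ∑ i, a i * log (a i / b i) ≤ 0) : a = b := by
  have hgap : ∀ i ∈ univ, 0 ≤ a i * log (a i / b i) - (a i - b i) := fun i _ =>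
    sub_nonneg.2 (sub_le_mul_log_div (ha i) (hb i) (hab i))
  have htotal : ∑ i, (a i * log (a i / b i) - (a i - b i)) = 0 := by
    refine le_antisymm ?_ (sum_nonneg hgap)
    rwa [sum_sub_distrib, sum_sub_distrib, hsum, sub_self, sub_zero]
  funext i
  have := (sum_eq_zero_iff_of_nonneg hgap).1 htotal i (mem_univ i)
  exact eq_of_mul_log_div_eq_sub (ha i) (hb i) (hab i) (by linarith)

end Gibbs

section Fiber

variable {X Z : Type*} [Fintype X] [DecidableEq Z]

noncomputable def fiberSum (f : X → Z) (g : X → ℝ) (z : Z) : ℝ :=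
  ∑ x ∈ univ.filter (fun x => f x = z), g x

variable {f : X → Z} {g h : X → ℝ}

lemma fiberSum_nonneg (hg : 0 ≤ g) (z : Z) : 0 ≤ fiberSum f g z :=
  sum_nonneg fun x _ => hg x

lemma le_fiberSum (hg : 0 ≤ g) (x : X) : g x ≤ fiberSum f g (f x) :=
  single_le_sum (fun x _ => hg x) (by simp)

lemma eq_zero_of_fiberSum_eq_zero (hg : 0 ≤ g) {x : X} (hx : fiberSum f g (f x) = 0) :
    g x = 0 :=
  le_antisymm ((le_fiberSum hg x).trans_eq hx) (hg x)

lemma fiberSum_mono (hgh : g ≤ h) (z : Z) : fiberSum f g z ≤ fiberSum f h z :=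
  sum_le_sum fun x _ => hgh x

lemma sum_mul_fiberSum [Fintype Z] (f : X → Z) (G : Z → ℝ) (g : X → ℝ) :
    ∑ z, G z * fiberSum f g z = ∑ x, G (f x) * g x := by
  simp only [fiberSum, mul_sum]
  rw [← sum_fiberwise univ f fun x => G (f x) * g x]
  exact sum_congr rfl fun z _ => sum_congr rfl fun x hx => by rw [(mem_filter.1 hx).2]

end Fiber

section Marginal

variable {X Y : Type*} [Fintype Y] {p : X → ℝ} {q : X × Y → ℝ}

lemma marginal_nonneg (hq : 0 ≤ q) (hmarg : ∀ x, ∑ y, q (x, y) = p x) : 0 ≤ p :=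
  fun x => hmarg x ▸ sum_nonneg fun y _ => hq (x, y)

lemma le_marginal (hq : 0 ≤ q) (hmarg : ∀ x, ∑ y, q (x, y) = p x) (x : X) (y : Y) :
    q (x, y) ≤ p x :=
  hmarg x ▸ single_le_sum (fun y _ => hq (x, y)) (mem_univ y)

end Marginal

section MarkovProj

variable {X Y Z : Type*} [Fintype X] [DecidableEq Z]

noncomputable def markovProj (f : X → Z) (p : X → ℝ) (q : X × Y → ℝ) (xy : X × Y) : ℝ :=
  p xy.1 * (fiberSum f (fun x => q (x, xy.2)) (f xy.1) / fiberSum f p (f xy.1))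

variable {f : X → Z} {p : X → ℝ} {q : X × Y → ℝ}

lemma markovProj_mul_fiberSum (hp : 0 ≤ p) (x : X) (y : Y) :
    markovProj f p q (x, y) * fiberSum f p (f x) =
      p x * fiberSum f (fun x' => q (x', y)) (f x) := by
  unfold markovProj
  by_cases hm : fiberSum f p (f x) = 0
  · simp [eq_zero_of_fiberSum_eq_zero hp hm]
  · field_simp

variable [Fintype Y]

lemma fiberSum_slice_eq_zero (hq : 0 ≤ q) (hmarg : ∀ x, ∑ y, q (x, y) = p x) {z : Z}
    (hz : fiberSum f p z = 0) (y : Y) : fiberSum f (fun x => q (x, y)) z = 0 :=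
  le_antisymm (hz ▸ fiberSum_mono (fun x => le_marginal hq hmarg x y) z)
    (fiberSum_nonneg (fun x => hq (x, y)) z)

lemma sum_fiberSum_slice (hmarg : ∀ x, ∑ y, q (x, y) = p x) (z : Z) :
    ∑ y, fiberSum f (fun x => q (x, y)) z = fiberSum f p z := by
  simp only [fiberSum]
  rw [sum_comm]
  exact sum_congr rfl fun x _ => hmarg x

lemma markovProj_nonneg (hq : 0 ≤ q) (hmarg : ∀ x, ∑ y, q (x, y) = p x) :
    0 ≤ markovProj f p q := fun _ =>
  mul_nonneg (marginal_nonneg hq hmarg _)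
    (div_nonneg (fiberSum_nonneg (fun x => hq (x, _)) _)
      (fiberSum_nonneg (marginal_nonneg hq hmarg) _))

lemma marginal_and_fiberSums_pos (hq : 0 ≤ q) (hmarg : ∀ x, ∑ y, q (x, y) = p x) {x : X} {y : Y}
    (hxy : 0 < q (x, y)) :
    0 < p x ∧ 0 < fiberSum f p (f x) ∧ 0 < fiberSum f (fun x' => q (x', y)) (f x) := by
  have hpx : 0 < p x := hxy.trans_le (le_marginal hq hmarg x y)
  exact ⟨hpx, hpx.trans_le (le_fiberSum (marginal_nonneg hq hmarg) x),
    hxy.trans_le (le_fiberSum (g := fun x' => q (x', y)) (fun x' => hq (x', y)) x)⟩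

lemma markovProj_pos (hq : 0 ≤ q) (hmarg : ∀ x, ∑ y, q (x, y) = p x) {x : X} {y : Y}
    (hxy : 0 < q (x, y)) : 0 < markovProj f p q (x, y) := by
  obtain ⟨hpx, hm, hr⟩ := marginal_and_fiberSums_pos (f := f) hq hmarg hxy
  unfold markovProj
  positivity

lemma sum_markovProj_right (hq : 0 ≤ q) (hmarg : ∀ x, ∑ y, q (x, y) = p x) (x : X) :
    ∑ y, markovProj f p q (x, y) = p x := by
  simp only [markovProj, ← mul_sum, ← sum_div, sum_fiberSum_slice hmarg]
  by_cases hm : fiberSum f p (f x) = 0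
  · simp [eq_zero_of_fiberSum_eq_zero (marginal_nonneg hq hmarg) hm]
  · rw [div_self hm, mul_one]

variable [Fintype Z]

lemma sum_markovProj_mul_comp (hq : 0 ≤ q) (hmarg : ∀ x, ∑ y, q (x, y) = p x) (y : Y)
    (G : Z → ℝ) : ∑ x, markovProj f p q (x, y) * G (f x) = ∑ x, q (x, y) * G (f x) := by
  set r := fiberSum f (fun x => q (x, y))
  set m := fiberSum f p
  calc ∑ x, markovProj f p q (x, y) * G (f x) = ∑ x, G (f x) * (r (f x) / m (f x)) * p x :=
        sum_congr rfl fun x _ => by simp only [markovProj]; ring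
    _ = ∑ z, G z * (r z / m z) * m z := (sum_mul_fiberSum f (fun z => G z * (r z / m z)) p).symm
    _ = ∑ z, G z * r z := sum_congr rfl fun z _ => by
        by_cases hm : m z = 0
        · simp [hm, fiberSum_slice_eq_zero hq hmarg hm y, r]
        · rw [mul_assoc, div_mul_cancel₀ _ hm]
    _ = ∑ x, q (x, y) * G (f x) := by
        rw [sum_mul_fiberSum]
        exact sum_congr rfl fun x _ => mul_comm _ _

lemma sum_markovProj_left (hq : 0 ≤ q) (hmarg : ∀ x, ∑ y, q (x, y) = p x) (y : Y) :
    ∑ x, markovProj f p q (x, y) = ∑ x, q (x, y) := by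
  simpa using sum_markovProj_mul_comp hq hmarg y 1

lemma sum_markovProj_mul (hq : 0 ≤ q) (hmarg : ∀ x, ∑ y, q (x, y) = p x) (g : Z → Y → ℝ) :
    ∑ xy, markovProj f p q xy * g (f xy.1) xy.2 = ∑ xy, q xy * g (f xy.1) xy.2 := by
  simp only [Fintype.sum_prod_type_right]
  exact sum_congr rfl fun y _ => sum_markovProj_mul_comp hq hmarg y (g · y)

lemma finDist_markovProj (hq : FinDist q) (hmarg : ∀ x, ∑ y, q (x, y) = p x) :
    FinDist (markovProj f p q) := by
  refine ⟨markovProj_nonneg hq.1 hmarg, ?_⟩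
  have := sum_markovProj_mul (f := f) hq.1 hmarg fun _ _ => 1
  simp only [mul_one] at this
  rw [this, hq.2]

end MarkovProj

section MutualInfo

variable {X Y Z : Type*} [Fintype X] [Fintype Y]

lemma mutualInfo_eq_sum {q : X × Y → ℝ} (hq : 0 ≤ q) :
    mutualInfo q =
      ∑ xy, q xy * log (q xy / ((∑ y, q (xy.1, y)) * ∑ x, q (x, xy.2))) := by
  refine sum_congr rfl fun xy _ => ?_
  split_ifs with h
  · rfl
  · rw [le_antisymm (not_lt.1 h) (hq xy), zero_mul]

variable [Fintype Z] [DecidableEq Z] {f : X → Z} {p : X → ℝ} {q : X × Y → ℝ}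

theorem mutualInfo_eq_mutualInfo_markovProj_add (hq : 0 ≤ q)
    (hmarg : ∀ x, ∑ y, q (x, y) = p x) :
    mutualInfo q =
      mutualInfo (markovProj f p q) + ∑ xy, q xy * log (q xy / markovProj f p q xy) := by
  set c : Z → Y → ℝ := fun z y =>
    log (fiberSum f (fun x => q (x, y)) z / (fiberSum f p z * ∑ x, q (x, y)))
  have hproj : mutualInfo (markovProj f p q) = ∑ xy, markovProj f p q xy * c (f xy.1) xy.2 := by
    rw [mutualInfo_eq_sum (markovProj_nonneg hq hmarg)]
    refine sum_congr rfl fun ⟨x, y⟩ _ => ?_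
    rw [sum_markovProj_right hq hmarg, sum_markovProj_left hq hmarg]
    by_cases h : markovProj f p q (x, y) = 0
    · simp [h]
    have hp := (mul_ne_zero_iff.1 h).1
    simp only [markovProj, c]
    rw [mul_div_mul_left _ _ hp, div_div]
  have hq_split : mutualInfo q =
      ∑ xy, q xy * log (q xy / markovProj f p q xy) + ∑ xy, q xy * c (f xy.1) xy.2 := by
    rw [mutualInfo_eq_sum hq, ← sum_add_distrib]
    refine sum_congr rfl fun ⟨x, y⟩ _ => ?_
    rcases (show 0 ≤ q (x, y) from hq _).eq_or_lt with h | h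
    · simp [← h]
    obtain ⟨hpx, hm, hr⟩ := marginal_and_fiberSums_pos (f := f) hq hmarg h
    have hq₂ : 0 < ∑ x', q (x', y) := h.trans_le (single_le_sum (f := fun x' => q (x', y))
      (fun x' _ => hq (x', y)) (mem_univ x))
    simp only [markovProj, c, hmarg x]
    rw [← mul_add, ← log_mul (by positivity) (by positivity)]
    congr 2
    field_simp
  rw [hproj, hq_split, sum_markovProj_mul hq hmarg c]
  ring

end MutualInfo

theorem zero_distortion_minimizer_markov_general
    {X Z : Type*} [Fintype X] [Fintype Z] [DecidableEq Z]
    (f : X → Z) (ℓ : Z × Z → ℝ)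
    (p : X → ℝ)
    (q : X × X → ℝ) (hq : FinDist q)
    (hmarg : ∀ x, ∑ xh, q (x, xh) = p x)
    (hdist : ∑ xy : X × X, q xy * ℓ (f xy.1, f xy.2) = 0)
    (hmin : ∀ q' : X × X → ℝ, FinDist q' → (∀ x, ∑ xh, q' (x, xh) = p x) →
      (∑ xy : X × X, q' xy * ℓ (f xy.1, f xy.2)) = 0 → mutualInfo q ≤ mutualInfo q') :
    ∀ x xh : X,
      q (x, xh) * (∑ x' ∈ univ.filter (fun x' => f x' = f x), p x') =
        p x * (∑ x' ∈ univ.filter (fun x' => f x' = f x), q (x', xh)) := by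
  have hproj := finDist_markovProj (f := f) hq hmarg
  have hle : mutualInfo q ≤ mutualInfo (markovProj f p q) :=
    hmin _ hproj (sum_markovProj_right hq.1 hmarg)
      ((sum_markovProj_mul hq.1 hmarg fun z y => ℓ (z, f y)).trans hdist)
  have hdiv : ∑ xy, q xy * log (q xy / markovProj f p q xy) ≤ 0 := by
    linarith [mutualInfo_eq_mutualInfo_markovProj_add (f := f) hq.1 hmarg]
  have heq : q = markovProj f p q :=
    eq_of_sum_mul_log_div_nonpos hq.1 hproj.1 (fun _ => markovProj_pos hq.1 hmarg)
      (hq.2.trans hproj.2.symm) hdiv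
  intro x y
  rw [congrFun heq (x, y)]
  exact markovProj_mul_fiberSum (marginal_nonneg hq.1 hmarg) x y

/-- information bottleneck at zero distortion.  If `q` has first
marginal `p`, zero expected distortion under `(x,x̂) ↦ ℓ(f x, f x̂)`, and minimal mutual
information among all such distributions, then the two coordinates of `q` are
conditionally independent given `f` of the first coordinate:
`q(x,x̂) · m(f x) = p(x) · r(f x, x̂)` where `m(z) = Σ_{x' : f x' = z} p x'` and
`r(z,x̂) = Σ_{x' : f x' = z} q (x',x̂)`. -/
theorem zero_distortion_minimizer_markov
    {X Z : Type*} [Fintype X] [Nonempty X] [Fintype Z] [Nonempty Z] [DecidableEq Z]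
    (f : X → Z) (ℓ : Z × Z → ℝ) (hℓ : ∀ z zh, 0 ≤ ℓ (z, zh)) (hℓ0 : ∀ z, ℓ (z, z) = 0)
    (p : X → ℝ) (hp : FinDist p)
    (q : X × X → ℝ) (hq : FinDist q)
    (hmarg : ∀ x, ∑ xh, q (x, xh) = p x)
    (hdist : ∑ xy : X × X, q xy * ℓ (f xy.1, f xy.2) = 0)
    (hmin : ∀ q' : X × X → ℝ, FinDist q' → (∀ x, ∑ xh, q' (x, xh) = p x) →
      (∑ xy : X × X, q' xy * ℓ (f xy.1, f xy.2)) = 0 → mutualInfo q ≤ mutualInfo q') :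
    ∀ x xh : X,
      q (x, xh) * (∑ x' ∈ univ.filter (fun x' => f x' = f x), p x') =
        p x * (∑ x' ∈ univ.filter (fun x' => f x' = f x), q (x', xh)) :=
  zero_distortion_minimizer_markov_general f ℓ p q hq hmarg hdist hmin
end
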